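/- For random variables w, Y with 0 < Var(w), Var(Y) < ∞, and any random variable ε with Var(ε) ≤ c²·Var(w) and Cov(w, ε) = 0, we have |Cov(ε, Y)| ≤ c·√(1 - cor²(w,Y))·√(Var(w)·Var(Y)), and this bound is achieved by ε = c·√(Var(w)/Var(r))·r where r is the residual of Y after linear projection onto w (provided Var(r) > 0). -/

import Mathlib

open MeasureTheory

/-- Expectation of a real random variable. -/
noncomputable def expec {Ω : Type*} [MeasurableSpace Ω] (μ : Measure Ω) (X : Ω → ℝ) : ℝ :=
  ∫ ω, X ω ∂μ

/-- Covariance of two real random variables. -/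
noncomputable def cov {Ω : Type*} [MeasurableSpace Ω] (μ : Measure Ω) (X Y : Ω → ℝ) : ℝ :=
  expec μ (fun ω => (X ω - expec μ X) * (Y ω - expec μ Y))

/-- Variance of a real random variable. -/
noncomputable def Var {Ω : Type*} [MeasurableSpace Ω] (μ : Measure Ω) (X : Ω → ℝ) : ℝ :=
  cov μ X X

/-- Pearson correlation of two real random variables. -/
noncomputable def cor {Ω : Type*} [MeasurableSpace Ω] (μ : Measure Ω) (X Y : Ω → ℝ) : ℝ :=
  cov μ X Y / Real.sqrt (Var μ X * Var μ Y)

/-!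
Let `r` be the residual of `Y` after linear projection onto `w`. Then `cov(w, r) = 0`, so
`cov(ε, Y) = cov(ε, r)` for every `ε` uncorrelated with `w`, and Cauchy–Schwarz gives
`|cov(ε, Y)| ≤ √Var ε · √Var r ≤ c √(Var w · Var r)`. Moreover
`Var w · Var r = Var w · Var Y - cov(w, Y)² = (1 - cor²) · Var w · Var Y`. A nonnegative multiple
of `r` is itself uncorrelated with `w` and makes Cauchy–Schwarz an equality.
-/

open ProbabilityTheory

section Covariance

variable {Ω : Type*} [MeasurableSpace Ω] {μ : Measure Ω} {X Y : Ω → ℝ}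

lemma cov_eq_covariance (μ : Measure Ω) (X Y : Ω → ℝ) : cov μ X Y = covariance X Y μ := rfl

lemma cov_comm (X Y : Ω → ℝ) : cov μ X Y = cov μ Y X := covariance_comm X Y

lemma var_nonneg (X : Ω → ℝ) : 0 ≤ Var μ X :=
  integral_nonneg fun _ => mul_self_nonneg _

lemma var_const_mul (a : ℝ) (X : Ω → ℝ) : Var μ (fun ω => a * X ω) = a ^ 2 * Var μ X := by
  simp only [Var, cov_eq_covariance, covariance_const_mul_left, covariance_const_mul_right]
  ring

variable [IsFiniteMeasure μ]

/-- Cauchy–Schwarz: `t ↦ Var (t X + Y)` is a nonnegative quadratic, so its discriminant is `≤ 0`. -/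
lemma sq_cov_le_var_mul_var (hX : MemLp X 2 μ) (hY : MemLp Y 2 μ) :
    cov μ X Y ^ 2 ≤ Var μ X * Var μ Y := by
  have hquad : ∀ t : ℝ, 0 ≤ Var μ X * (t * t) + 2 * cov μ X Y * t + Var μ Y := fun t => by
    have hVar : Var μ (t • X + Y) = Var μ X * (t * t) + 2 * cov μ X Y * t + Var μ Y := by
      simp only [Var, cov_eq_covariance, covariance_add_left (hX.const_smul t) hY
        ((hX.const_smul t).add hY), covariance_add_right (hX.const_smul t) (hX.const_smul t) hY,
        covariance_add_right hY (hX.const_smul t) hY, covariance_smul_left,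
        covariance_smul_right, covariance_comm Y X]
      ring
    exact hVar ▸ var_nonneg _
  have := discrim_le_zero hquad
  rw [discrim] at this
  linarith

lemma abs_cov_le_sqrt_var_mul_sqrt_var (hX : MemLp X 2 μ) (hY : MemLp Y 2 μ) :
    |cov μ X Y| ≤ √(Var μ X) * √(Var μ Y) := by
  rw [← Real.sqrt_sq_eq_abs, ← Real.sqrt_mul (var_nonneg X)]
  exact Real.sqrt_le_sqrt (sq_cov_le_var_mul_var hX hY)

/-- If `Var X = 0` then `cov X Y = 0` by Cauchy–Schwarz, so the junk value `cov X Y / 0 = 0`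
does no harm. -/
lemma cov_div_var_mul_var (hX : MemLp X 2 μ) (hY : MemLp Y 2 μ) :
    cov μ X Y / Var μ X * Var μ X = cov μ X Y := by
  rcases eq_or_ne (Var μ X) 0 with hV | hV
  · have := sq_cov_le_var_mul_var hX hY
    rw [hV, zero_mul] at this
    rw [hV, mul_zero, pow_eq_zero_iff two_ne_zero |>.mp (le_antisymm this (sq_nonneg _))]
  · exact div_mul_cancel₀ _ hV

lemma one_sub_cor_sq_mul (hX : MemLp X 2 μ) (hY : MemLp Y 2 μ) :
    (1 - cor μ X Y ^ 2) * (Var μ X * Var μ Y) = Var μ X * Var μ Y - cov μ X Y ^ 2 := by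
  have hVV := mul_nonneg (var_nonneg (μ := μ) X) (var_nonneg (μ := μ) Y)
  rw [cor, div_pow, Real.sq_sqrt hVV, sub_mul, one_mul]
  rcases eq_or_ne (Var μ X * Var μ Y) 0 with h | h
  · have := sq_cov_le_var_mul_var hX hY
    rw [h] at this ⊢
    rw [pow_eq_zero_iff two_ne_zero |>.mp (le_antisymm this (sq_nonneg _))]
    simp
  · rw [div_mul_cancel₀ _ h]

end Covariance

noncomputable def linResidual {Ω : Type*} [MeasurableSpace Ω] (μ : Measure Ω) (X Y : Ω → ℝ) :
    Ω → ℝ :=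
  fun ω => Y ω - expec μ Y - (cov μ X Y / Var μ X) * (X ω - expec μ X)

section LinResidual

variable {Ω : Type*} [MeasurableSpace Ω] {μ : Measure Ω} [IsProbabilityMeasure μ]
  {X Y Z : Ω → ℝ}

lemma memLp_linResidual (hX : MemLp X 2 μ) (hY : MemLp Y 2 μ) :
    MemLp (linResidual μ X Y) 2 μ :=
  (hY.sub (memLp_const _)).sub ((hX.sub (memLp_const _)).const_mul _)

lemma cov_linResidual (hX : MemLp X 2 μ) (hY : MemLp Y 2 μ) (hZ : MemLp Z 2 μ) :
    cov μ Z (linResidual μ X Y) = cov μ Z Y - cov μ X Y / Var μ X * cov μ Z X := by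
  have hXi : Integrable X μ := hX.integrable one_le_two
  have hYi : Integrable Y μ := hY.integrable one_le_two
  have hYc : MemLp (fun ω => Y ω - expec μ Y) 2 μ := hY.sub (memLp_const _)
  have hXc : MemLp (fun ω => cov μ X Y / Var μ X * (X ω - expec μ X)) 2 μ :=
    (hX.sub (memLp_const _)).const_mul _
  unfold linResidual
  rw [cov_eq_covariance μ Z, covariance_fun_sub_right hZ hYc hXc,
    covariance_sub_const_right hYi, covariance_const_mul_right, covariance_sub_const_right hXi]
  rfl

lemma cov_linResidual_self (hX : MemLp X 2 μ) (hY : MemLp Y 2 μ) :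
    cov μ X (linResidual μ X Y) = 0 := by
  rw [cov_linResidual hX hY hX, ← Var, cov_div_var_mul_var hX hY, sub_self]

lemma cov_linResidual_left_eq_var (hX : MemLp X 2 μ) (hY : MemLp Y 2 μ) :
    cov μ (linResidual μ X Y) Y = Var μ (linResidual μ X Y) := by
  rw [Var, cov_linResidual hX hY (memLp_linResidual hX hY), cov_comm _ X,
    cov_linResidual_self hX hY, mul_zero, sub_zero]

lemma var_mul_var_linResidual (hX : MemLp X 2 μ) (hY : MemLp Y 2 μ) :
    Var μ X * Var μ (linResidual μ X Y) = Var μ X * Var μ Y - cov μ X Y ^ 2 := by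
  rw [← cov_linResidual_left_eq_var hX hY, cov_comm, cov_linResidual hX hY hY, ← Var,
    cov_comm Y X]
  linear_combination -cov μ X Y * cov_div_var_mul_var hX hY

lemma sqrt_one_sub_cor_sq_mul_sqrt (hX : MemLp X 2 μ) (hY : MemLp Y 2 μ) :
    √(1 - cor μ X Y ^ 2) * √(Var μ X * Var μ Y) = √(Var μ X * Var μ (linResidual μ X Y)) := by
  rw [← Real.sqrt_mul' _ (mul_nonneg (var_nonneg X) (var_nonneg Y)), one_sub_cor_sq_mul hX hY,
    var_mul_var_linResidual hX hY]

lemma abs_cov_le_of_var_le {ε : Ω → ℝ} {c : ℝ} (hX : MemLp X 2 μ) (hY : MemLp Y 2 μ)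
    (hε : MemLp ε 2 μ) (hc : 0 ≤ c) (hVε : Var μ ε ≤ c ^ 2 * Var μ X) (horth : cov μ X ε = 0) :
    |cov μ ε Y| ≤ c * √(Var μ X * Var μ (linResidual μ X Y)) := by
  have hεr : cov μ ε (linResidual μ X Y) = cov μ ε Y := by
    rw [cov_linResidual hX hY hε, cov_comm ε X, horth, mul_zero, sub_zero]
  calc |cov μ ε Y| = |cov μ ε (linResidual μ X Y)| := by rw [hεr]
    _ ≤ √(Var μ ε) * √(Var μ (linResidual μ X Y)) :=
      abs_cov_le_sqrt_var_mul_sqrt_var hε (memLp_linResidual hX hY)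
    _ ≤ √(c ^ 2 * Var μ X) * √(Var μ (linResidual μ X Y)) := by gcongr
    _ = c * √(Var μ X * Var μ (linResidual μ X Y)) := by
      rw [Real.sqrt_mul (sq_nonneg c), Real.sqrt_sq hc, Real.sqrt_mul (var_nonneg X), mul_assoc]

lemma linResidual_extremal {c : ℝ} (hX : MemLp X 2 μ) (hY : MemLp Y 2 μ) (hc : 0 ≤ c)
    (hr : 0 < Var μ (linResidual μ X Y)) :
    let ε := fun ω => c * √(Var μ X / Var μ (linResidual μ X Y)) * linResidual μ X Y ω
    Var μ ε = c ^ 2 * Var μ X ∧ cov μ X ε = 0 ∧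
      |cov μ ε Y| = c * √(Var μ X * Var μ (linResidual μ X Y)) := by
  have hVX := var_nonneg (μ := μ) X
  refine ⟨?_, ?_, ?_⟩
  · rw [var_const_mul, mul_pow, Real.sq_sqrt (div_nonneg hVX hr.le)]
    field_simp
  · rw [cov_eq_covariance, covariance_const_mul_right, ← cov_eq_covariance,
      cov_linResidual_self hX hY, mul_zero]
  · rw [cov_eq_covariance, covariance_const_mul_left, ← cov_eq_covariance,
      cov_linResidual_left_eq_var hX hY, abs_of_nonneg (by positivity), Real.sqrt_div hVX,
      Real.sqrt_mul hVX, mul_assoc, div_mul_eq_mul_div, mul_div_assoc, Real.div_sqrt]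

end LinResidual

theorem stmt_18_general {Ω : Type*} [MeasurableSpace Ω] (μ : Measure Ω) [IsProbabilityMeasure μ]
    (w Y ε : Ω → ℝ) (c : ℝ)
    (hw : MemLp w 2 μ) (hY : MemLp Y 2 μ) (hε : MemLp ε 2 μ)
    (hc : 0 ≤ c)
    (hVε : Var μ ε ≤ c ^ 2 * Var μ w)
    (horth : cov μ w ε = 0) :
    |cov μ ε Y| ≤ c * Real.sqrt (1 - (cor μ w Y) ^ 2) * Real.sqrt (Var μ w * Var μ Y) ∧
    (∀ r : Ω → ℝ,
      r = (fun ω => Y ω - expec μ Y - (cov μ w Y / Var μ w) * (w ω - expec μ w)) →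
      0 < Var μ r →
      Var μ (fun ω => c * Real.sqrt (Var μ w / Var μ r) * r ω) ≤ c ^ 2 * Var μ w ∧
      cov μ w (fun ω => c * Real.sqrt (Var μ w / Var μ r) * r ω) = 0 ∧
      |cov μ (fun ω => c * Real.sqrt (Var μ w / Var μ r) * r ω) Y|
        = c * Real.sqrt (1 - (cor μ w Y) ^ 2) * Real.sqrt (Var μ w * Var μ Y)) := by
  rw [mul_assoc c, sqrt_one_sub_cor_sq_mul_sqrt hw hY]
  refine ⟨abs_cov_le_of_var_le hw hY hε hc hVε horth, ?_⟩
  rintro r rfl hr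
  obtain ⟨hVar, hcov, habs⟩ := linResidual_extremal hw hY hc hr
  exact ⟨hVar.le, hcov, habs⟩

theorem stmt_18 {Ω : Type*} [MeasurableSpace Ω] (μ : Measure Ω) [IsProbabilityMeasure μ]
    (w Y ε : Ω → ℝ) (c : ℝ)
    (hw : MemLp w 2 μ) (hY : MemLp Y 2 μ) (hε : MemLp ε 2 μ)
    (hc : 0 ≤ c)
    (hVw : 0 < Var μ w) (hVY : 0 < Var μ Y)
    (hVε : Var μ ε ≤ c ^ 2 * Var μ w)
    (horth : cov μ w ε = 0) :
    |cov μ ε Y| ≤ c * Real.sqrt (1 - (cor μ w Y) ^ 2) * Real.sqrt (Var μ w * Var μ Y) ∧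
    (∀ r : Ω → ℝ,
      r = (fun ω => Y ω - expec μ Y - (cov μ w Y / Var μ w) * (w ω - expec μ w)) →
      0 < Var μ r →
      Var μ (fun ω => c * Real.sqrt (Var μ w / Var μ r) * r ω) ≤ c ^ 2 * Var μ w ∧
      cov μ w (fun ω => c * Real.sqrt (Var μ w / Var μ r) * r ω) = 0 ∧
      |cov μ (fun ω => c * Real.sqrt (Var μ w / Var μ r) * r ω) Y|
        = c * Real.sqrt (1 - (cor μ w Y) ^ 2) * Real.sqrt (Var μ w * Var μ Y)) :=
  stmt_18_general μ w Y ε c hw hY hε hc hVε horth
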